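/- For every L_b ≥ 2, the ℂ-linear span of the set of states ψ that are OBC-Fibonacci-supported and satisfy H1 ψ = λ ψ for some λ ∈ ℂ is a subspace of dimension at most 4. -/
import Mathlib


open Finset

/-- The blocked three-letter alphabet `{O, L, R}`. -/
inductive Blk | O | L | R
deriving DecidableEq

/-- The one-body Hamiltonian in the blocked basis:
`(H1 ψ)(c) = Σ_j t_j(ψ, c)` with `t_j(ψ, c) = ψ(c[j↦L]) + ψ(c[j↦R])` if
`c(j) = O` and `t_j(ψ, c) = ψ(c[j↦O])` otherwise. -/
noncomputable def H1 {N : ℕ} (ψ : (Fin N → Blk) → ℂ) (c : Fin N → Blk) : ℂ :=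
  ∑ j : Fin N,
    if c j = Blk.O then
      ψ (Function.update c j Blk.L) + ψ (Function.update c j Blk.R)
    else ψ (Function.update c j Blk.O)

/-- `ψ` vanishes on all configurations containing an adjacent `(R, L)` pair
(open boundary conditions). -/
def OBCFibSupported {N : ℕ} (ψ : (Fin N → Blk) → ℂ) : Prop :=
  ∀ c : Fin N → Blk,
    (∃ j : ℕ, ∃ h1 : j < N, ∃ h2 : j + 1 < N,
      c ⟨j, h1⟩ = Blk.R ∧ c ⟨j + 1, h2⟩ = Blk.L) → ψ c = 0

instance : Fintype Blk := ⟨⟨{Blk.O, Blk.L, Blk.R}, by decide⟩, fun x => by cases x <;> decide⟩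

lemma H1_zero {N : ℕ} (c : Fin N → Blk) : H1 (fun _ => (0:ℂ)) c = 0 := by
  simp [H1]

lemma H1_add {N : ℕ} (f g : (Fin N → Blk) → ℂ) (c : Fin N → Blk) :
    H1 (fun d => f d + g d) c = H1 f c + H1 g c := by
  unfold H1
  rw [← Finset.sum_add_distrib]
  apply Finset.sum_congr rfl
  intro j _
  split <;> ring

lemma H1_smul {N : ℕ} (a : ℂ) (f : (Fin N → Blk) → ℂ) (c : Fin N → Blk) :
    H1 (fun d => a * f d) c = a * H1 f c := by
  unfold H1
  rw [Finset.mul_sum]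
  apply Finset.sum_congr rfl
  intro j _
  split <;> ring

lemma H1_neg {N : ℕ} (f : (Fin N → Blk) → ℂ) (c : Fin N → Blk) :
    H1 (fun d => -f d) c = -H1 f c := by
  have := H1_smul (-1 : ℂ) f c
  simpa using this

lemma H1_sub {N : ℕ} (f g : (Fin N → Blk) → ℂ) (c : Fin N → Blk) :
    H1 (fun d => f d - g d) c = H1 f c - H1 g c := by
  have h1 := H1_add f (fun d => -g d) c
  have h2 := H1_neg g c
  simp only [sub_eq_add_neg]
  rw [h1, h2]

lemma H1_cons {n : ℕ} (ψ : (Fin (n+1) → Blk) → ℂ) (x : Blk) (c : Fin n → Blk) :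
    H1 ψ (Fin.cons x c) =
      (if x = Blk.O then ψ (Fin.cons Blk.L c) + ψ (Fin.cons Blk.R c)
       else ψ (Fin.cons Blk.O c)) + H1 (fun d => ψ (Fin.cons x d)) c := by
  unfold H1
  rw [Fin.sum_univ_succ]
  congr 1
  · rw [Fin.cons_zero]
    simp only [Fin.update_cons_zero]
  · apply Finset.sum_congr rfl
    intro j _
    rw [Fin.cons_succ]
    simp only [← Fin.cons_update]

lemma H1_cons_O {n : ℕ} (ψ : (Fin (n+1) → Blk) → ℂ) (c : Fin n → Blk) :
    H1 ψ (Fin.cons Blk.O c) =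
      ψ (Fin.cons Blk.L c) + ψ (Fin.cons Blk.R c) + H1 (fun d => ψ (Fin.cons Blk.O d)) c := by
  rw [H1_cons]; simp

lemma H1_cons_L {n : ℕ} (ψ : (Fin (n+1) → Blk) → ℂ) (c : Fin n → Blk) :
    H1 ψ (Fin.cons Blk.L c) =
      ψ (Fin.cons Blk.O c) + H1 (fun d => ψ (Fin.cons Blk.L d)) c := by
  rw [H1_cons]; simp

lemma H1_cons_R {n : ℕ} (ψ : (Fin (n+1) → Blk) → ℂ) (c : Fin n → Blk) :
    H1 ψ (Fin.cons Blk.R c) =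
      ψ (Fin.cons Blk.O c) + H1 (fun d => ψ (Fin.cons Blk.R d)) c := by
  rw [H1_cons]; simp

lemma supp_tail {n : ℕ} {ψ : (Fin (n+1) → Blk) → ℂ} (h : OBCFibSupported ψ) (x : Blk) :
    OBCFibSupported (fun d => ψ (Fin.cons x d)) := by
  rintro c ⟨j, h1, h2, hR, hL⟩
  apply h
  refine ⟨j+1, by omega, by omega, ?_, ?_⟩
  · rw [show (⟨j+1, by omega⟩ : Fin (n+1)) = Fin.succ ⟨j, h1⟩ from rfl, Fin.cons_succ]
    exact hR
  · rw [show (⟨j+1+1, by omega⟩ : Fin (n+1)) = Fin.succ ⟨j+1, h2⟩ from rfl, Fin.cons_succ]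
    exact hL

lemma supp_RL {n : ℕ} {ψ : (Fin (n+2) → Blk) → ℂ} (h : OBCFibSupported ψ) (c : Fin n → Blk) :
    ψ (Fin.cons Blk.R (Fin.cons Blk.L c)) = 0 := by
  apply h
  refine ⟨0, by omega, by omega, ?_, ?_⟩
  · rw [show (⟨0, by omega⟩ : Fin (n+2)) = 0 from rfl, Fin.cons_zero]
  · rw [show (⟨1, by omega⟩ : Fin (n+2)) = Fin.succ 0 from rfl, Fin.cons_succ, Fin.cons_zero]

lemma H1_congr {N : ℕ} {f g : (Fin N → Blk) → ℂ} (h : ∀ d, f d = g d) (c : Fin N → Blk) :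
    H1 f c = H1 g c := by
  have : f = g := funext h
  rw [this]

lemma H1_comb3 {N : ℕ} (a : ℂ) (f g h : (Fin N → Blk) → ℂ) (c : Fin N → Blk) :
    H1 (fun d => a * f d - g d - h d) c = a * H1 f c - H1 g c - H1 h c := by
  unfold H1
  rw [Finset.mul_sum, ← Finset.sum_sub_distrib, ← Finset.sum_sub_distrib]
  apply Finset.sum_congr rfl
  intro j _
  split <;> ring

lemma H1_comb2 {N : ℕ} (a b : ℂ) (f g : (Fin N → Blk) → ℂ) (c : Fin N → Blk) :
    H1 (fun d => a * f d - b * g d) c = a * H1 f c - b * H1 g c := by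
  unfold H1
  rw [Finset.mul_sum, Finset.mul_sum, ← Finset.sum_sub_distrib]
  apply Finset.sum_congr rfl
  intro j _
  split <;> ring

/-- Fibonacci-supported eigenstates vanishing on all `L`-leading configurations vanish. -/
lemma Plemma : ∀ (m : ℕ) (lam : ℂ) (ψ : (Fin (m+1) → Blk) → ℂ),
    OBCFibSupported ψ → (∀ c, ψ (Fin.cons Blk.L c) = 0) →
    (∀ c, H1 ψ c = lam * ψ c) → ∀ c, ψ c = 0 := by
  intro m
  induction m with
  | zero =>
    intro lam ψ _ hL he c
    have hO : ∀ d : Fin 0 → Blk, ψ (Fin.cons Blk.O d) = 0 := by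
      intro d
      have h := he (Fin.cons Blk.L d)
      rw [H1_cons_L, hL d] at h
      simp only [hL] at h
      rw [H1_zero d] at h
      linear_combination h
    have hR : ∀ d : Fin 0 → Blk, ψ (Fin.cons Blk.R d) = 0 := by
      intro d
      have h := he (Fin.cons Blk.O d)
      rw [H1_cons_O, hL d, hO d] at h
      simp only [hO] at h
      rw [H1_zero d] at h
      linear_combination h
    rw [← Fin.cons_self_tail c]
    rcases h0 : c 0 with _ | _ | _
    · exact hO _
    · exact hL _
    · exact hR _
  | succ m ih =>
    intro lam ψ hs hL he c
    have hO : ∀ d, ψ (Fin.cons Blk.O d) = 0 := by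
      intro d
      have h := he (Fin.cons Blk.L d)
      rw [H1_cons_L, hL d] at h
      simp only [hL] at h
      rw [H1_zero d] at h
      linear_combination h
    have hR : ∀ d, ψ (Fin.cons Blk.R d) = 0 := by
      apply ih lam (fun d => ψ (Fin.cons Blk.R d)) (supp_tail hs _) (fun c => supp_RL hs c)
      intro d
      have h := he (Fin.cons Blk.R d)
      rw [H1_cons_R, hO d] at h
      linear_combination h
    rw [← Fin.cons_self_tail c]
    rcases h0 : c 0 with _ | _ | _
    · exact hO _
    · exact hL _
    · exact hR _

/-- Key injectivity: a Fibonacci-supported eigenstate on `m+3` sites whose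
`L`- and `R`-leading components agree is zero. -/
lemma keylemma (m : ℕ) (lam : ℂ) (ψ : (Fin (m+3) → Blk) → ℂ)
    (hs : OBCFibSupported ψ) (he : ∀ c, H1 ψ c = lam * ψ c)
    (hLR : ∀ c, ψ (Fin.cons Blk.L c) = ψ (Fin.cons Blk.R c)) :
    ∀ c, ψ c = 0 := by
  -- χ := ψ (L ·),  ψO := ψ (O ·), A := ψ (L O ·), B := ψ (L R ·)
  have hχL : ∀ c, ψ (Fin.cons Blk.L (Fin.cons Blk.L c)) = 0 := by
    intro c
    rw [hLR]
    exact supp_RL hs c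
  have hβL : ∀ c, ψ (Fin.cons Blk.L (Fin.cons Blk.R (Fin.cons Blk.L c))) = 0 :=
    fun c => supp_RL (supp_tail hs Blk.L) c
  have E2 : ∀ c, ψ (Fin.cons Blk.O c) + H1 (fun d => ψ (Fin.cons Blk.L d)) c
      = lam * ψ (Fin.cons Blk.L c) := by
    intro c
    have h := he (Fin.cons Blk.L c)
    rw [H1_cons_L] at h
    exact h
  have E1 : ∀ c, ψ (Fin.cons Blk.L c) + ψ (Fin.cons Blk.L c)
      + H1 (fun d => ψ (Fin.cons Blk.O d)) c = lam * ψ (Fin.cons Blk.O c) := by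
    intro c
    have h := he (Fin.cons Blk.O c)
    rw [H1_cons_O, ← hLR] at h
    exact h
  -- components of E2
  have PL : ∀ c, ψ (Fin.cons Blk.O (Fin.cons Blk.L c))
      = -ψ (Fin.cons Blk.L (Fin.cons Blk.O c)) := by
    intro c
    have h := E2 (Fin.cons Blk.L c)
    rw [H1_cons_L (fun d => ψ (Fin.cons Blk.L d))] at h
    simp only [hχL] at h
    rw [H1_zero c] at h
    linear_combination h
  have PO : ∀ c, ψ (Fin.cons Blk.O (Fin.cons Blk.O c))
      = lam * ψ (Fin.cons Blk.L (Fin.cons Blk.O c))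
        - ψ (Fin.cons Blk.L (Fin.cons Blk.R c))
        - H1 (fun d => ψ (Fin.cons Blk.L (Fin.cons Blk.O d))) c := by
    intro c
    have h := E2 (Fin.cons Blk.O c)
    rw [H1_cons_O (fun d => ψ (Fin.cons Blk.L d))] at h
    simp only [hχL] at h
    linear_combination h
  have PR : ∀ c, ψ (Fin.cons Blk.O (Fin.cons Blk.R c))
      = lam * ψ (Fin.cons Blk.L (Fin.cons Blk.R c))
        - ψ (Fin.cons Blk.L (Fin.cons Blk.O c))
        - H1 (fun d => ψ (Fin.cons Blk.L (Fin.cons Blk.R d))) c := by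
    intro c
    have h := E2 (Fin.cons Blk.R c)
    rw [H1_cons_R (fun d => ψ (Fin.cons Blk.L d))] at h
    linear_combination h
  -- component of E1 at L: I1
  have I1 : ∀ c, ψ (Fin.cons Blk.L (Fin.cons Blk.R c))
      = 2 * lam * ψ (Fin.cons Blk.L (Fin.cons Blk.O c))
        - 2 * H1 (fun d => ψ (Fin.cons Blk.L (Fin.cons Blk.O d))) c := by
    intro c
    have h := E1 (Fin.cons Blk.L c)
    rw [H1_cons_L (fun d => ψ (Fin.cons Blk.O d))] at h
    simp only [hχL, PL, PO] at h
    rw [H1_neg (fun d => ψ (Fin.cons Blk.L (Fin.cons Blk.O d)))] at h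
    linear_combination -h
  -- H1 applied to I1 :
  have IB : ∀ c, H1 (fun d => ψ (Fin.cons Blk.L (Fin.cons Blk.R d))) c
      = 2 * lam * H1 (fun d => ψ (Fin.cons Blk.L (Fin.cons Blk.O d))) c
        - 2 * H1 (fun d => H1 (fun e => ψ (Fin.cons Blk.L (Fin.cons Blk.O e))) d) c := by
    intro c
    rw [H1_congr I1 c, H1_comb2 (2*lam) 2]
  -- component of E1 at O, cleaned
  have E1O : ∀ c,
      lam * ψ (Fin.cons Blk.L (Fin.cons Blk.R c))
      - 2 * H1 (fun d => ψ (Fin.cons Blk.L (Fin.cons Blk.R d))) c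
      + lam * H1 (fun d => ψ (Fin.cons Blk.L (Fin.cons Blk.O d))) c
      - H1 (fun d => H1 (fun e => ψ (Fin.cons Blk.L (Fin.cons Blk.O e))) d) c
      = lam * lam * ψ (Fin.cons Blk.L (Fin.cons Blk.O c))
        - lam * ψ (Fin.cons Blk.L (Fin.cons Blk.R c))
        - lam * H1 (fun d => ψ (Fin.cons Blk.L (Fin.cons Blk.O d))) c := by
    intro c
    have h := E1 (Fin.cons Blk.O c)
    rw [H1_cons_O (fun d => ψ (Fin.cons Blk.O d))] at h
    simp only [PL, PR, PO] at h
    rw [H1_comb3 lam (fun d => ψ (Fin.cons Blk.L (Fin.cons Blk.O d)))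
      (fun d => ψ (Fin.cons Blk.L (Fin.cons Blk.R d)))
      (fun d => H1 (fun e => ψ (Fin.cons Blk.L (Fin.cons Blk.O e))) d) c] at h
    linear_combination h
  -- β is an eigenstate
  have hβeig : ∀ c, H1 (fun d => ψ (Fin.cons Blk.L (Fin.cons Blk.R d))) c
      = lam * ψ (Fin.cons Blk.L (Fin.cons Blk.R c)) := by
    intro c
    linear_combination (-(1:ℂ)/3) * IB c + (lam/3) * I1 c - (2/3) * E1O c
  have hBzero : ∀ c, ψ (Fin.cons Blk.L (Fin.cons Blk.R c)) = 0 :=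
    Plemma m lam _ (supp_tail (supp_tail hs Blk.L) Blk.R) hβL hβeig
  -- α is an eigenstate
  have hQ : ∀ c, H1 (fun d => ψ (Fin.cons Blk.L (Fin.cons Blk.O d))) c
      = lam * ψ (Fin.cons Blk.L (Fin.cons Blk.O c)) := by
    intro c
    have h := I1 c
    rw [hBzero c] at h
    linear_combination ((1:ℂ)/2) * h
  have hαL : ∀ c, ψ (Fin.cons Blk.L (Fin.cons Blk.O (Fin.cons Blk.L c))) = 0 := by
    intro c
    have h := PR (Fin.cons Blk.L c)
    rw [supp_RL (supp_tail hs Blk.O) c, hβL c, H1_congr hBzero, H1_zero] at h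
    linear_combination h
  have hAzero : ∀ c, ψ (Fin.cons Blk.L (Fin.cons Blk.O c)) = 0 :=
    Plemma m lam _ (supp_tail (supp_tail hs Blk.L) Blk.O) hαL hQ
  have hχzero : ∀ c, ψ (Fin.cons Blk.L c) = 0 := by
    intro c
    rw [← Fin.cons_self_tail c]
    rcases h0 : c 0 with _ | _ | _
    · exact hAzero _
    · exact hχL _
    · exact hBzero _
  have hψOzero : ∀ c, ψ (Fin.cons Blk.O c) = 0 := by
    intro c
    have h := E2 c
    rw [hχzero c, H1_congr hχzero, H1_zero] at h
    linear_combination h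
  intro c
  rw [← Fin.cons_self_tail c]
  rcases h0 : c 0 with _ | _ | _
  · exact hψOzero _
  · exact hχzero _
  · rw [← hLR]
    exact hχzero _

lemma H1_fin0 (f : (Fin 0 → Blk) → ℂ) (c : Fin 0 → Blk) : H1 f c = 0 := by
  simp [H1]

/-- configurations of the 2-site chain -/
abbrev cfg (x y : Blk) : Fin 2 → Blk := Fin.cons x (Fin.cons y Fin.elim0)

lemma H1_two (ψ : (Fin 2 → Blk) → ℂ) (x y : Blk) :
    H1 ψ (cfg x y) =
      (if x = Blk.O then ψ (cfg Blk.L y) + ψ (cfg Blk.R y) else ψ (cfg Blk.O y))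
      + (if y = Blk.O then ψ (cfg x Blk.L) + ψ (cfg x Blk.R) else ψ (cfg x Blk.O)) := by
  show H1 ψ (Fin.cons x (Fin.cons y Fin.elim0)) = _
  rw [H1_cons, H1_cons (fun d => ψ (Fin.cons x d)) y Fin.elim0, H1_fin0]
  simp [cfg]

/-- All the structure of the 2-site problem. -/
lemma base_master (lam : ℂ) (ψ : (Fin 2 → Blk) → ℂ)
    (hs : OBCFibSupported ψ) (he : ∀ c, H1 ψ c = lam * ψ c) :
    lam * ψ (cfg Blk.O Blk.O) = 0 ∧
    lam * (lam^2 - 2) * ψ (cfg Blk.O Blk.L) = 0 ∧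
    (ψ (cfg Blk.O Blk.O) = 0 → ψ (cfg Blk.O Blk.L) = 0 → ∀ c, ψ c = 0) := by
  have hRL : ψ (cfg Blk.R Blk.L) = 0 := supp_RL hs Fin.elim0
  have eOO := he (cfg Blk.O Blk.O); rw [H1_two] at eOO; simp at eOO
  have eOL := he (cfg Blk.O Blk.L); rw [H1_two] at eOL; simp at eOL
  have eOR := he (cfg Blk.O Blk.R); rw [H1_two] at eOR; simp at eOR
  have eLO := he (cfg Blk.L Blk.O); rw [H1_two] at eLO; simp at eLO
  have eLL := he (cfg Blk.L Blk.L); rw [H1_two] at eLL; simp at eLL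
  have eLR := he (cfg Blk.L Blk.R); rw [H1_two] at eLR; simp at eLR
  have eRL := he (cfg Blk.R Blk.L); rw [H1_two] at eRL; simp at eRL
  have eRO := he (cfg Blk.R Blk.O); rw [H1_two] at eRO; simp at eRO
  have eRR := he (cfg Blk.R Blk.R); rw [H1_two] at eRR; simp at eRR
  have k2 : ψ (cfg Blk.L Blk.L) = lam * ψ (cfg Blk.O Blk.L) - ψ (cfg Blk.O Blk.O) := by
    linear_combination eOL - hRL
  have k1 : ψ (cfg Blk.R Blk.O) = -ψ (cfg Blk.O Blk.L) := by
    linear_combination eRL + lam * hRL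
  have k3 : ψ (cfg Blk.L Blk.O)
      = lam^2 * ψ (cfg Blk.O Blk.L) - lam * ψ (cfg Blk.O Blk.O) - ψ (cfg Blk.O Blk.L) := by
    linear_combination eLL + lam * k2
  have k4 : ψ (cfg Blk.R Blk.R) = -lam * ψ (cfg Blk.O Blk.L) - ψ (cfg Blk.O Blk.O) := by
    linear_combination eRO + lam * k1 - hRL
  have k5 : ψ (cfg Blk.O Blk.R)
      = ψ (cfg Blk.O Blk.L) - lam^2 * ψ (cfg Blk.O Blk.L) - lam * ψ (cfg Blk.O Blk.O) := by
    linear_combination eRR - k1 + lam * k4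
  have k6 : ψ (cfg Blk.L Blk.R)
      = lam^3 * ψ (cfg Blk.O Blk.L) - 2 * lam * ψ (cfg Blk.O Blk.L)
        - lam^2 * ψ (cfg Blk.O Blk.O) := by
    linear_combination eLO + lam * k3 - k2
  refine ⟨?_, ?_, ?_⟩
  · linear_combination (-(1:ℂ)/3) * (eOO - k3 - k1 - k5)
  · linear_combination ((1:ℂ)/2) * (eOR - k6 - k4 + lam * k5)
  · intro haO haL
    have vRO : ψ (cfg Blk.R Blk.O) = 0 := by rw [k1, haL, neg_zero]
    have vLL : ψ (cfg Blk.L Blk.L) = 0 := by rw [k2, haO, haL]; ring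
    have vLO : ψ (cfg Blk.L Blk.O) = 0 := by rw [k3, haO, haL]; ring
    have vRR : ψ (cfg Blk.R Blk.R) = 0 := by rw [k4, haO, haL]; ring
    have vOR : ψ (cfg Blk.O Blk.R) = 0 := by rw [k5, haO, haL]; ring
    have vLR : ψ (cfg Blk.L Blk.R) = 0 := by rw [k6, haO, haL]; ring
    intro c
    rw [← Fin.cons_self_tail c, ← Fin.cons_self_tail (Fin.tail c),
      show Fin.tail (Fin.tail c) = Fin.elim0 from funext (fun i => i.elim0)]
    rcases c 0 with _ | _ | _ <;> rcases Fin.tail c 0 with _ | _ | _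
    · exact haO
    · exact haL
    · exact vOR
    · exact vLO
    · exact vLL
    · exact vLR
    · exact vRO
    · exact hRL
    · exact vRR

/-- The space of Fibonacci-supported eigenstates with eigenvalue `lam`. -/
noncomputable def V (lam : ℂ) (N : ℕ) : Submodule ℂ ((Fin N → Blk) → ℂ) where
  carrier := {ψ | OBCFibSupported ψ ∧ ∀ c, H1 ψ c = lam * ψ c}
  add_mem' := by
    rintro a b ⟨hsa, hea⟩ ⟨hsb, heb⟩
    refine ⟨fun c hc => ?_, fun c => ?_⟩
    · have h1 := hsa c hc
      have h2 := hsb c hc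
      show a c + b c = 0
      rw [h1, h2, add_zero]
    · show H1 (fun d => a d + b d) c = lam * (a c + b c)
      rw [H1_add, hea c, heb c]
      ring
  zero_mem' := by
    refine ⟨fun c _ => rfl, fun c => ?_⟩
    show H1 (fun _ => (0:ℂ)) c = lam * 0
    rw [H1_zero, mul_zero]
  smul_mem' := by
    rintro r a ⟨hsa, hea⟩
    refine ⟨fun c hc => ?_, fun c => ?_⟩
    · show r * a c = 0
      rw [hsa c hc, mul_zero]
    · show H1 (fun d => r * a d) c = lam * (r * a c)
      rw [H1_smul, hea c]
      ring

/-- The left-restriction difference map. -/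
noncomputable def Tmap (n : ℕ) :
    ((Fin (n+1) → Blk) → ℂ) →ₗ[ℂ] ((Fin n → Blk) → ℂ) where
  toFun ψ := fun c => ψ (Fin.cons Blk.L c) - ψ (Fin.cons Blk.R c)
  map_add' a b := by funext c; simp only [Pi.add_apply]; ring
  map_smul' r a := by
    funext c; simp only [Pi.smul_apply, smul_eq_mul, RingHom.id_apply]; ring

lemma Tmap_mem {lam : ℂ} {n : ℕ} {ψ : (Fin (n+1) → Blk) → ℂ} (h : ψ ∈ V lam (n+1)) :
    Tmap n ψ ∈ V lam n := by
  obtain ⟨hs, he⟩ := h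
  refine ⟨fun c hc => ?_, fun c => ?_⟩
  · show ψ (Fin.cons Blk.L c) - ψ (Fin.cons Blk.R c) = 0
    have h1 : ψ (Fin.cons Blk.L c) = 0 := supp_tail hs Blk.L c hc
    have h2 : ψ (Fin.cons Blk.R c) = 0 := supp_tail hs Blk.R c hc
    rw [h1, h2, sub_zero]
  · show H1 (fun d => ψ (Fin.cons Blk.L d) - ψ (Fin.cons Blk.R d)) c
      = lam * (ψ (Fin.cons Blk.L c) - ψ (Fin.cons Blk.R c))
    rw [H1_sub]
    have hL := he (Fin.cons Blk.L c)
    have hR := he (Fin.cons Blk.R c)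
    rw [H1_cons_L] at hL
    rw [H1_cons_R] at hR
    linear_combination hL - hR

lemma V_bot (lam : ℂ) (h0 : lam ≠ 0) (h2 : lam^2 ≠ 2) :
    ∀ (m : ℕ) (ψ : (Fin (m+2) → Blk) → ℂ), ψ ∈ V lam (m+2) → ∀ c, ψ c = 0 := by
  intro m
  induction m with
  | zero =>
    rintro ψ ⟨hs, he⟩
    obtain ⟨p1, p2, p3⟩ := base_master lam ψ hs he
    have haO : ψ (cfg Blk.O Blk.O) = 0 := by
      rcases mul_eq_zero.mp p1 with h | h
      · exact absurd h h0
      · exact h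
    have haL : ψ (cfg Blk.O Blk.L) = 0 := by
      rcases mul_eq_zero.mp p2 with h | h
      · rcases mul_eq_zero.mp h with h' | h'
        · exact absurd h' h0
        · exact absurd (by linear_combination h') h2
      · exact h
    exact p3 haO haL
  | succ m ih =>
    rintro ψ hψ
    have hT := ih (Tmap (m+2) ψ) (Tmap_mem hψ)
    obtain ⟨hs, he⟩ := hψ
    apply keylemma m lam ψ hs he
    intro c
    have := hT c
    simpa [Tmap, sub_eq_zero] using this

lemma rank_le_base (lam : ℂ) :
    ∀ m : ℕ, Module.finrank ℂ (V lam (m+2)) ≤ Module.finrank ℂ (V lam 2) := by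
  intro m
  induction m with
  | zero => exact le_refl _
  | succ m ih =>
    refine le_trans ?_ ih
    have hmap : ∀ ψ ∈ V lam (m+3), Tmap (m+2) ψ ∈ V lam (m+2) := fun ψ h => Tmap_mem h
    let f : V lam (m+3) →ₗ[ℂ] V lam (m+2) := (Tmap (m+2)).restrict hmap
    have hinj : Function.Injective f := by
      rw [injective_iff_map_eq_zero]
      rintro ⟨ψ, hψ⟩ hf
      obtain ⟨hs, he⟩ := hψ
      have hLR : ∀ c, ψ (Fin.cons Blk.L c) = ψ (Fin.cons Blk.R c) := by
        intro c
        have := congrFun (congrArg Subtype.val hf) c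
        simpa [f, Tmap, LinearMap.restrict_apply, sub_eq_zero] using this
      have := keylemma m lam ψ hs he hLR
      exact Subtype.ext (funext this)
    exact LinearMap.finrank_le_finrank_of_injective hinj

lemma rank_two_le_two (lam : ℂ) : Module.finrank ℂ (V lam 2) ≤ 2 := by
  let f : V lam 2 →ₗ[ℂ] ℂ × ℂ :=
  { toFun := fun ψ => (ψ.1 (cfg Blk.O Blk.O), ψ.1 (cfg Blk.O Blk.L))
    map_add' := fun a b => rfl
    map_smul' := fun r a => rfl }
  have hinj : Function.Injective f := by
    rw [injective_iff_map_eq_zero]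
    rintro ⟨ψ, hψ⟩ hf
    obtain ⟨hs, he⟩ := hψ
    have h1 : ψ (cfg Blk.O Blk.O) = 0 := congrArg Prod.fst hf
    have h2 : ψ (cfg Blk.O Blk.L) = 0 := congrArg Prod.snd hf
    obtain ⟨_, _, p3⟩ := base_master lam ψ hs he
    exact Subtype.ext (funext (p3 h1 h2))
  have := LinearMap.finrank_le_finrank_of_injective hinj
  simpa [Module.finrank_prod, Module.finrank_self] using this

lemma rank_two_le_one (lam : ℂ) (h0 : lam ≠ 0) : Module.finrank ℂ (V lam 2) ≤ 1 := by
  let f : V lam 2 →ₗ[ℂ] ℂ :=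
  { toFun := fun ψ => ψ.1 (cfg Blk.O Blk.L)
    map_add' := fun a b => rfl
    map_smul' := fun r a => rfl }
  have hinj : Function.Injective f := by
    rw [injective_iff_map_eq_zero]
    rintro ⟨ψ, hψ⟩ hf
    obtain ⟨hs, he⟩ := hψ
    have h2 : ψ (cfg Blk.O Blk.L) = 0 := hf
    obtain ⟨p1, _, p3⟩ := base_master lam ψ hs he
    have h1 : ψ (cfg Blk.O Blk.O) = 0 := by
      rcases mul_eq_zero.mp p1 with h | h
      · exact absurd h h0
      · exact h
    exact Subtype.ext (funext (p3 h1 h2))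
  have := LinearMap.finrank_le_finrank_of_injective hinj
  simpa [Module.finrank_self] using this


/-- for OBC chains of `L_b ≥ 2` blocks, the span of the
Fibonacci-supported eigenstates of `H1` has dimension at most `4`. -/
theorem span_OBC_fib_H1_eigenstates_finrank_le_four
    (Lb : ℕ) (hLb : 2 ≤ Lb) :
    Module.finrank ℂ
      (Submodule.span ℂ {ψ : (Fin Lb → Blk) → ℂ |
        OBCFibSupported ψ ∧ ∃ lam : ℂ, ∀ c, H1 ψ c = lam * ψ c}) ≤ 4 := by
  obtain ⟨m, rfl⟩ : ∃ m, Lb = m + 2 := ⟨Lb - 2, by omega⟩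
  set r : ℂ := ((Real.sqrt 2 : ℝ) : ℂ) with hr
  have hr2 : r ^ 2 = 2 := by
    rw [hr]
    norm_cast
    exact Real.sq_sqrt (by norm_num)
  have hrne : r ≠ 0 := by
    rw [hr]
    exact_mod_cast Real.sqrt_ne_zero'.mpr (by norm_num)
  have hnegne : -r ≠ 0 := neg_ne_zero.mpr hrne
  have hspan : Submodule.span ℂ {ψ : (Fin (m+2) → Blk) → ℂ |
      OBCFibSupported ψ ∧ ∃ lam : ℂ, ∀ c, H1 ψ c = lam * ψ c}
      ≤ V r (m+2) ⊔ V 0 (m+2) ⊔ V (-r) (m+2) := by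
    rw [Submodule.span_le]
    rintro ψ ⟨hs, lam, he⟩
    by_cases hl : lam = 0
    · subst hl
      exact Submodule.mem_sup_left (Submodule.mem_sup_right ⟨hs, he⟩)
    by_cases hsq : lam ^ 2 = 2
    · have : (lam - r) * (lam + r) = 0 := by linear_combination hsq - hr2
      rcases mul_eq_zero.mp this with h | h
      · have : lam = r := by linear_combination h
        subst this
        exact Submodule.mem_sup_left (Submodule.mem_sup_left ⟨hs, he⟩)
      · have : lam = -r := by linear_combination h
        subst this
        exact Submodule.mem_sup_right ⟨hs, he⟩
    · have hz := V_bot lam hl hsq m ψ ⟨hs, he⟩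
      have : ψ = 0 := funext hz
      rw [this]
      exact Submodule.zero_mem _
  refine le_trans (Submodule.finrank_mono hspan) ?_
  have h1 : Module.finrank ℂ (V r (m+2)) ≤ 1 :=
    le_trans (rank_le_base r m) (rank_two_le_one r hrne)
  have h2 : Module.finrank ℂ (V 0 (m+2)) ≤ 2 :=
    le_trans (rank_le_base 0 m) (rank_two_le_two 0)
  have h3 : Module.finrank ℂ (V (-r) (m+2)) ≤ 1 :=
    le_trans (rank_le_base (-r) m) (rank_two_le_one (-r) hnegne)
  calc Module.finrank ℂ ↑(V r (m+2) ⊔ V 0 (m+2) ⊔ V (-r) (m+2))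
      ≤ Module.finrank ℂ ↑(V r (m+2) ⊔ V 0 (m+2)) + Module.finrank ℂ (V (-r) (m+2)) :=
        Submodule.finrank_add_le_finrank_add_finrank _ _
    _ ≤ Module.finrank ℂ (V r (m+2)) + Module.finrank ℂ (V 0 (m+2))
        + Module.finrank ℂ (V (-r) (m+2)) :=
        Nat.add_le_add_right (Submodule.finrank_add_le_finrank_add_finrank _ _) _
    _ ≤ 1 + 2 + 1 := by omega
    _ ≤ 4 := by norm_num
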